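/- Monotonicity of equilibrium protection in β_IA: fix m and K ∈ ℕ. If 0 < β¹_IA ≤ β²_IA ≤ 1 and x¹, x² are Nash equilibria of the population games with indirect attack probabilities β¹_IA, β²_IA respectively, then Σ_{d ∈ 𝒟} x¹_{d,P} ≤ Σ_{d ∈ 𝒟} x²_{d,P}. -/

import Mathlib

open Finset

/-- The three actions: Protection, No action, Insurance. -/
inductive Act | P | N | I
deriving DecidableEq

/-- `𝒟 = {1, …, D_max}`. -/
def Dset (Dmax : ℕ) : Finset ℕ := Finset.Icc 1 Dmax

/-- Weighted degree distribution `w_d = d·m_d / ∑ d'·m_{d'}`. -/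
noncomputable def wgt (Dmax : ℕ) (m : ℕ → ℝ) (d : ℕ) : ℝ :=
  (d : ℝ) * m d / ∑ d' ∈ Dset Dmax, (d' : ℝ) * m d'

/-- `γ(x) = β_IA · ∑_d w_d (g_{d,P} p_P + (1 − g_{d,P}) p_U)`, where
`g_{d,P} = x_{d,P}/m_d`. -/
noncomputable def gam (Dmax : ℕ) (m : ℕ → ℝ) (pP pU βIA : ℝ) (xP : ℕ → ℝ) : ℝ :=
  βIA * ∑ d ∈ Dset Dmax, wgt Dmax m d * ((xP d / m d) * pP + (1 - xP d / m d) * pU)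

/-- `λ(x) = β_IA · ∑_d w_d (d−1) (g_{d,P} p_P + (1 − g_{d,P}) p_U)`. -/
noncomputable def lamb (Dmax : ℕ) (m : ℕ → ℝ) (pP pU βIA : ℝ) (xP : ℕ → ℝ) : ℝ :=
  βIA * ∑ d ∈ Dset Dmax,
    wgt Dmax m d * ((d : ℝ) - 1) * ((xP d / m d) * pP + (1 - xP d / m d) * pU)

/-- Risk exposure `e(x) = γ(x) · ∑_{k=1}^{K} λ(x)^{k−1}`. -/
noncomputable def expo (Dmax : ℕ) (m : ℕ → ℝ) (pP pU βIA : ℝ) (K : ℕ)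
    (xP : ℕ → ℝ) : ℝ :=
  gam Dmax m pP pU βIA xP * ∑ k ∈ Finset.range K, lamb Dmax m pP pU βIA xP ^ k

/-- Cost of a degree-`d` node playing action `a` at a social state with protected
masses `xP`:  `C_{d,P} = τ(1 + d·e)L_P + c_P`, `C_{d,N} = τ(1 + d·e)L_U`,
`C_{d,I} = C_{d,N} + c_I − min(Cov_max, ξ·max(0, C_{d,N} − ded))`. -/
noncomputable def cost (Dmax : ℕ) (m : ℕ → ℝ) (pP pU βIA τ LP LU cP cI ξ ded Cov : ℝ)
    (K : ℕ) (xP : ℕ → ℝ) (d : ℕ) : Act → ℝ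
  | Act.P => τ * (1 + (d : ℝ) * expo Dmax m pP pU βIA K xP) * LP + cP
  | Act.N => τ * (1 + (d : ℝ) * expo Dmax m pP pU βIA K xP) * LU
  | Act.I => τ * (1 + (d : ℝ) * expo Dmax m pP pU βIA K xP) * LU + cI
      - min Cov (ξ * max 0 (τ * (1 + (d : ℝ) * expo Dmax m pP pU βIA K xP) * LU - ded))

/-- Admissible social state: nonnegative masses summing to `m_d` within each population. -/
def isState (Dmax : ℕ) (m : ℕ → ℝ) (x : ℕ → Act → ℝ) : Prop :=
  ∀ d ∈ Dset Dmax, (∀ a : Act, 0 ≤ x d a) ∧ x d Act.P + x d Act.N + x d Act.I = m d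

/-- Nash equilibrium: any action played by a positive mass of population `d`
minimizes the cost for population `d`. -/
def isNE (Dmax : ℕ) (m : ℕ → ℝ) (pP pU βIA τ LP LU cP cI ξ ded Cov : ℝ)
    (K : ℕ) (x : ℕ → Act → ℝ) : Prop :=
  isState Dmax m x ∧
    ∀ d ∈ Dset Dmax, ∀ a : Act, 0 < x d a →
      ∀ a' : Act, cost Dmax m pP pU βIA τ LP LU cP cI ξ ded Cov K (fun d' => x d' Act.P) d a
        ≤ cost Dmax m pP pU βIA τ LP LU cP cI ξ ded Cov K (fun d' => x d' Act.P) d a'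

/-!
For `a ≠ P`, the advantage `C_a − C_P` of protecting depends on the state only through
`u = d·e` and is strictly increasing in `u`: the payout of insurance grows at rate at most
`ξ`, and `L_P < (1 − ξ) L_U`. Hence if population `d` protects at an equilibrium with
exposure `e` and population `d'` does not fully protect at one with exposure `e'`, then
`d'·e' ≤ d·e`.

If protection fell from `x¹` to `x²`, some population `d₀` would protect less at `x²`, giving
`0 < e²` and `e² ≤ e¹`. Any population protecting more at `x²` would force `e¹ = e²`, and then
the threshold structure at the common exposure makes it equal to `d₀`, which is absurd; so
`x²_P ≤ x¹_P` pointwise, strictly at `d₀`. But the exposure strictly decreases with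
protection and increases with `β_IA`, so `e¹ < e²`: a contradiction.
-/

section Exposure

variable {Dmax : ℕ} {m : ℕ → ℝ} {pP pU : ℝ}

lemma wgt_pos (hm : ∀ d ∈ Dset Dmax, 0 < m d) {d : ℕ} (hd : d ∈ Dset Dmax) :
    0 < wgt Dmax m d := by
  have hpos : ∀ d ∈ Dset Dmax, 0 < (d : ℝ) * m d := fun d hd =>
    mul_pos (Nat.cast_pos.mpr (mem_Icc.mp hd).1) (hm d hd)
  exact div_pos (hpos d hd) (sum_pos hpos ⟨d, hd⟩)

lemma mix_nonneg {g : ℝ} (hpP : 0 ≤ pP) (hp : pP ≤ pU) (hg : g ≤ 1) :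
    0 ≤ g * pP + (1 - g) * pU := by
  nlinarith

lemma mix_pos {g : ℝ} (hpP : 0 ≤ pP) (hp : pP < pU) (hg : g < 1) :
    0 < g * pP + (1 - g) * pU := by
  nlinarith

lemma mix_le_mix {g g' : ℝ} (hp : pP ≤ pU) (h : g ≤ g') :
    g' * pP + (1 - g') * pU ≤ g * pP + (1 - g) * pU := by
  nlinarith

lemma mix_lt_mix {g g' : ℝ} (hp : pP < pU) (h : g < g') :
    g' * pP + (1 - g') * pU < g * pP + (1 - g) * pU := by
  nlinarith

variable {s : Finset ℕ} {c f f₁ f₂ : ℕ → ℝ}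

lemma sum_mul_mix_nonneg (hm : ∀ d ∈ s, 0 < m d) (hpP : 0 ≤ pP) (hp : pP ≤ pU)
    (hc : ∀ d ∈ s, 0 ≤ c d) (hf : ∀ d ∈ s, f d ≤ m d) :
    0 ≤ ∑ d ∈ s, c d * (f d / m d * pP + (1 - f d / m d) * pU) :=
  sum_nonneg fun d hd =>
    mul_nonneg (hc d hd) (mix_nonneg hpP hp ((div_le_one (hm d hd)).mpr (hf d hd)))

lemma sum_mul_mix_pos (hm : ∀ d ∈ s, 0 < m d) (hpP : 0 ≤ pP) (hp : pP < pU)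
    (hc : ∀ d ∈ s, 0 < c d) (hf : ∀ d ∈ s, f d ≤ m d)
    {d₀ : ℕ} (hd₀ : d₀ ∈ s) (hlt : f d₀ < m d₀) :
    0 < ∑ d ∈ s, c d * (f d / m d * pP + (1 - f d / m d) * pU) :=
  sum_pos' (fun d hd =>
      mul_nonneg (hc d hd).le (mix_nonneg hpP hp.le ((div_le_one (hm d hd)).mpr (hf d hd))))
    ⟨d₀, hd₀, mul_pos (hc d₀ hd₀) (mix_pos hpP hp ((div_lt_one (hm d₀ hd₀)).mpr hlt))⟩

lemma sum_mul_mix_le_sum_mul_mix (hm : ∀ d ∈ s, 0 < m d) (hp : pP ≤ pU)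
    (hc : ∀ d ∈ s, 0 ≤ c d) (hle : ∀ d ∈ s, f₂ d ≤ f₁ d) :
    ∑ d ∈ s, c d * (f₁ d / m d * pP + (1 - f₁ d / m d) * pU)
      ≤ ∑ d ∈ s, c d * (f₂ d / m d * pP + (1 - f₂ d / m d) * pU) :=
  sum_le_sum fun d hd => mul_le_mul_of_nonneg_left
    (mix_le_mix hp (div_le_div_of_nonneg_right (hle d hd) (hm d hd).le)) (hc d hd)

lemma sum_mul_mix_lt_sum_mul_mix (hm : ∀ d ∈ s, 0 < m d) (hp : pP < pU)
    (hc : ∀ d ∈ s, 0 < c d) (hle : ∀ d ∈ s, f₂ d ≤ f₁ d)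
    {d₀ : ℕ} (hd₀ : d₀ ∈ s) (hlt : f₂ d₀ < f₁ d₀) :
    ∑ d ∈ s, c d * (f₁ d / m d * pP + (1 - f₁ d / m d) * pU)
      < ∑ d ∈ s, c d * (f₂ d / m d * pP + (1 - f₂ d / m d) * pU) :=
  sum_lt_sum
    (fun d hd => mul_le_mul_of_nonneg_left
      (mix_le_mix hp.le (div_le_div_of_nonneg_right (hle d hd) (hm d hd).le)) (hc d hd).le)
    ⟨d₀, hd₀, mul_lt_mul_of_pos_left
      (mix_lt_mix hp (div_lt_div_of_pos_right hlt (hm d₀ hd₀))) (hc d₀ hd₀)⟩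

variable {β β₁ β₂ : ℝ} {K : ℕ}

lemma gam_nonneg (hm : ∀ d ∈ Dset Dmax, 0 < m d) (hpP : 0 ≤ pP) (hp : pP ≤ pU) (hβ : 0 ≤ β)
    (hf : ∀ d ∈ Dset Dmax, f d ≤ m d) : 0 ≤ gam Dmax m pP pU β f :=
  mul_nonneg hβ (sum_mul_mix_nonneg hm hpP hp (fun _ hd => (wgt_pos hm hd).le) hf)

lemma gam_pos (hm : ∀ d ∈ Dset Dmax, 0 < m d) (hpP : 0 ≤ pP) (hp : pP < pU) (hβ : 0 < β)
    (hf : ∀ d ∈ Dset Dmax, f d ≤ m d) {d₀ : ℕ} (hd₀ : d₀ ∈ Dset Dmax) (hlt : f d₀ < m d₀) :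
    0 < gam Dmax m pP pU β f :=
  mul_pos hβ (sum_mul_mix_pos hm hpP hp (fun _ hd => wgt_pos hm hd) hf hd₀ hlt)

lemma gam_lt_gam (hm : ∀ d ∈ Dset Dmax, 0 < m d) (hpP : 0 ≤ pP) (hp : pP < pU)
    (hβ₁ : 0 < β₁) (hββ : β₁ ≤ β₂) (hf₁ : ∀ d ∈ Dset Dmax, f₁ d ≤ m d)
    (hle : ∀ d ∈ Dset Dmax, f₂ d ≤ f₁ d) {d₀ : ℕ} (hd₀ : d₀ ∈ Dset Dmax)
    (hlt : f₂ d₀ < f₁ d₀) :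
    gam Dmax m pP pU β₁ f₁ < gam Dmax m pP pU β₂ f₂ :=
  calc gam Dmax m pP pU β₁ f₁ < gam Dmax m pP pU β₁ f₂ :=
        mul_lt_mul_of_pos_left
          (sum_mul_mix_lt_sum_mul_mix hm hp (fun _ hd => wgt_pos hm hd) hle hd₀ hlt) hβ₁
    _ ≤ gam Dmax m pP pU β₂ f₂ :=
        mul_le_mul_of_nonneg_right hββ <| sum_mul_mix_nonneg hm hpP hp.le
          (fun _ hd => (wgt_pos hm hd).le) fun d hd => (hle d hd).trans (hf₁ d hd)

lemma wgt_mul_sub_one_nonneg (hm : ∀ d ∈ Dset Dmax, 0 < m d) {d : ℕ} (hd : d ∈ Dset Dmax) :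
    0 ≤ wgt Dmax m d * ((d : ℝ) - 1) :=
  mul_nonneg (wgt_pos hm hd).le (sub_nonneg.mpr (Nat.one_le_cast.mpr (mem_Icc.mp hd).1))

lemma lamb_nonneg (hm : ∀ d ∈ Dset Dmax, 0 < m d) (hpP : 0 ≤ pP) (hp : pP ≤ pU) (hβ : 0 ≤ β)
    (hf : ∀ d ∈ Dset Dmax, f d ≤ m d) : 0 ≤ lamb Dmax m pP pU β f :=
  mul_nonneg hβ (sum_mul_mix_nonneg hm hpP hp (fun _ hd => wgt_mul_sub_one_nonneg hm hd) hf)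

lemma lamb_le_lamb (hm : ∀ d ∈ Dset Dmax, 0 < m d) (hpP : 0 ≤ pP) (hp : pP ≤ pU)
    (hβ₁ : 0 ≤ β₁) (hββ : β₁ ≤ β₂) (hf₁ : ∀ d ∈ Dset Dmax, f₁ d ≤ m d)
    (hle : ∀ d ∈ Dset Dmax, f₂ d ≤ f₁ d) :
    lamb Dmax m pP pU β₁ f₁ ≤ lamb Dmax m pP pU β₂ f₂ :=
  mul_le_mul hββ
    (sum_mul_mix_le_sum_mul_mix hm hp (fun _ hd => wgt_mul_sub_one_nonneg hm hd) hle)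
    (sum_mul_mix_nonneg hm hpP hp (fun _ hd => wgt_mul_sub_one_nonneg hm hd) hf₁)
    (hβ₁.trans hββ)

lemma expo_pos (hm : ∀ d ∈ Dset Dmax, 0 < m d) (hpP : 0 ≤ pP) (hp : pP < pU) (hβ : 0 < β)
    (hK : 0 < K) (hf : ∀ d ∈ Dset Dmax, f d ≤ m d) {d₀ : ℕ} (hd₀ : d₀ ∈ Dset Dmax)
    (hlt : f d₀ < m d₀) :
    0 < expo Dmax m pP pU β K f :=
  mul_pos (gam_pos hm hpP hp hβ hf hd₀ hlt)
    (geom_sum_pos (lamb_nonneg hm hpP hp.le hβ.le hf) hK.ne')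

lemma expo_lt_expo (hm : ∀ d ∈ Dset Dmax, 0 < m d) (hpP : 0 ≤ pP) (hp : pP < pU)
    (hβ₁ : 0 < β₁) (hββ : β₁ ≤ β₂) (hK : 0 < K) (hf₁ : ∀ d ∈ Dset Dmax, f₁ d ≤ m d)
    (hle : ∀ d ∈ Dset Dmax, f₂ d ≤ f₁ d) {d₀ : ℕ} (hd₀ : d₀ ∈ Dset Dmax)
    (hlt : f₂ d₀ < f₁ d₀) :
    expo Dmax m pP pU β₁ K f₁ < expo Dmax m pP pU β₂ K f₂ := by
  have hlamb₁ := lamb_nonneg hm hpP hp.le hβ₁.le hf₁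
  have hlamb := lamb_le_lamb hm hpP hp.le hβ₁.le hββ hf₁ hle
  calc expo Dmax m pP pU β₁ K f₁
      ≤ gam Dmax m pP pU β₁ f₁ * ∑ k ∈ range K, lamb Dmax m pP pU β₂ f₂ ^ k :=
        mul_le_mul_of_nonneg_left (sum_le_sum fun k _ => pow_le_pow_left₀ hlamb₁ hlamb k)
          (gam_nonneg hm hpP hp.le hβ₁.le hf₁)
    _ < expo Dmax m pP pU β₂ K f₂ :=
        mul_lt_mul_of_pos_right (gam_lt_gam hm hpP hp hβ₁ hββ hf₁ hle hd₀ hlt)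
          (geom_sum_pos (hlamb₁.trans hlamb) hK.ne')

end Exposure

section Costs

variable {τ LP LU cP cI ξ ded Cov : ℝ}

def payout (ξ ded Cov t : ℝ) : ℝ := min Cov (ξ * max 0 (t - ded))

lemma payout_sub_payout_le (hξ : 0 ≤ ξ) {t t' : ℝ} (h : t ≤ t') :
    payout ξ ded Cov t' - payout ξ ded Cov t ≤ ξ * (t' - t) := by
  have hmax : max 0 (t' - ded) ≤ max 0 (t - ded) + (t' - t) := by
    have := max_sub_max_le_max 0 (t' - ded) 0 (t - ded)
    rw [sub_self, sub_sub_sub_cancel_right, max_eq_right (sub_nonneg.mpr h)] at this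
    linarith
  have hmin := min_le_min (le_add_of_nonneg_right (a := Cov) (mul_nonneg hξ (sub_nonneg.mpr h)))
    (mul_le_mul_of_nonneg_left hmax hξ)
  rw [mul_add, min_add_add_right] at hmin
  unfold payout
  linarith

def costAt (τ LP LU cP cI ξ ded Cov u : ℝ) : Act → ℝ
  | Act.P => τ * (1 + u) * LP + cP
  | Act.N => τ * (1 + u) * LU
  | Act.I => τ * (1 + u) * LU + cI - payout ξ ded Cov (τ * (1 + u) * LU)

lemma cost_eq_costAt (Dmax : ℕ) (m : ℕ → ℝ) (pP pU β : ℝ) (K : ℕ) (xP : ℕ → ℝ) (d : ℕ)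
    (a : Act) :
    cost Dmax m pP pU β τ LP LU cP cI ξ ded Cov K xP d a
      = costAt τ LP LU cP cI ξ ded Cov (d * expo Dmax m pP pU β K xP) a := by
  cases a <;> rfl

lemma strictMono_costAt_sub_costAt_P (hτ : 0 < τ) (hLP : 0 < LP) (hL : LP < (1 - ξ) * LU)
    (hξ₀ : 0 ≤ ξ) (hξ₁ : ξ ≤ 1) {a : Act} (ha : a ≠ Act.P) :
    StrictMono fun u =>
      costAt τ LP LU cP cI ξ ded Cov u a - costAt τ LP LU cP cI ξ ded Cov u Act.P := by
  have hLU : 0 < LU := by nlinarith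
  intro u v huv
  have hτuv : 0 < τ * (v - u) := mul_pos hτ (sub_pos.mpr huv)
  cases a with
  | P => exact absurd rfl ha
  | N =>
    simp only [costAt]
    nlinarith [mul_pos hτuv (show 0 < LU - LP by nlinarith)]
  | I =>
    have hpay := payout_sub_payout_le (ded := ded) (Cov := Cov) hξ₀
      (show τ * (1 + u) * LU ≤ τ * (1 + v) * LU by nlinarith)
    simp only [costAt]
    nlinarith [mul_pos hτuv (sub_pos.mpr hL)]

end Costs

section Equilibrium

variable {Dmax : ℕ} {m : ℕ → ℝ} {x y : ℕ → Act → ℝ} {d d' d₀ : ℕ}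

lemma isState.protection_nonneg (hx : isState Dmax m x) (hd : d ∈ Dset Dmax) :
    0 ≤ x d Act.P :=
  (hx d hd).1 Act.P

lemma isState.protection_le (hx : isState Dmax m x) (hd : d ∈ Dset Dmax) :
    x d Act.P ≤ m d := by
  obtain ⟨hnn, hsum⟩ := hx d hd
  linarith [hnn Act.N, hnn Act.I]

lemma isState.exists_ne_P_pos (hx : isState Dmax m x) (hd : d ∈ Dset Dmax)
    (hlt : x d Act.P < m d) : ∃ a ≠ Act.P, 0 < x d a := by
  obtain ⟨hnn, hsum⟩ := hx d hd
  by_contra! h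
  linarith [h Act.N (by decide), h Act.I (by decide)]

variable {pP pU τ LP LU cP cI ξ ded Cov β β' : ℝ} {K : ℕ}
  (hτ : 0 < τ) (hLP : 0 < LP) (hL : LP < (1 - ξ) * LU) (hξ₀ : 0 ≤ ξ) (hξ₁ : ξ ≤ 1)
  (hx : isNE Dmax m pP pU β τ LP LU cP cI ξ ded Cov K x)
  (hy : isNE Dmax m pP pU β' τ LP LU cP cI ξ ded Cov K y)
include hτ hLP hL hξ₀ hξ₁ hx hy

lemma mul_expo_le_of_isNE (hd : d ∈ Dset Dmax) (hd' : d' ∈ Dset Dmax)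
    (hxd : 0 < x d Act.P) (hyd' : y d' Act.P < m d') :
    (d' : ℝ) * expo Dmax m pP pU β' K (fun d => y d Act.P)
      ≤ d * expo Dmax m pP pU β K (fun d => x d Act.P) := by
  obtain ⟨a, ha, hya⟩ := hy.1.exists_ne_P_pos hd' hyd'
  have hP_best := hx.2 d hd Act.P hxd a
  have ha_best := hy.2 d' hd' a hya Act.P
  rw [cost_eq_costAt, cost_eq_costAt] at hP_best ha_best
  exact (strictMono_costAt_sub_costAt_P hτ hLP hL hξ₀ hξ₁ ha).le_iff_le.mp
    (by linarith)

lemma expo_le_expo_of_isNE (hd₀ : d₀ ∈ Dset Dmax) (hlt : y d₀ Act.P < x d₀ Act.P) :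
    expo Dmax m pP pU β' K (fun d => y d Act.P) ≤ expo Dmax m pP pU β K (fun d => x d Act.P) :=
  le_of_mul_le_mul_left
    (mul_expo_le_of_isNE hτ hLP hL hξ₀ hξ₁ hx hy hd₀ hd₀
      ((hy.1.protection_nonneg hd₀).trans_lt hlt) (hlt.trans_le (hx.1.protection_le hd₀)))
    (Nat.cast_pos.mpr (mem_Icc.mp hd₀).1)

lemma protection_le_of_isNE (hpos : 0 < expo Dmax m pP pU β' K (fun d => y d Act.P))
    (hd₀ : d₀ ∈ Dset Dmax) (hlt : y d₀ Act.P < x d₀ Act.P) :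
    ∀ d ∈ Dset Dmax, y d Act.P ≤ x d Act.P := by
  intro d hd
  by_contra! hxy
  have he : expo Dmax m pP pU β K (fun d => x d Act.P)
      = expo Dmax m pP pU β' K (fun d => y d Act.P) :=
    le_antisymm (expo_le_expo_of_isNE hτ hLP hL hξ₀ hξ₁ hy hx hd hxy)
      (expo_le_expo_of_isNE hτ hLP hL hξ₀ hξ₁ hx hy hd₀ hlt)
  have h₁ := mul_expo_le_of_isNE hτ hLP hL hξ₀ hξ₁ hx hx hd₀ hd
    ((hy.1.protection_nonneg hd₀).trans_lt hlt) (hxy.trans_le (hy.1.protection_le hd))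
  have h₂ := mul_expo_le_of_isNE hτ hLP hL hξ₀ hξ₁ hy hy hd hd₀
    ((hx.1.protection_nonneg hd).trans_lt hxy) (hlt.trans_le (hx.1.protection_le hd₀))
  rw [he] at h₁
  -- at a common positive exposure, at most one population is indifferent to protecting
  have : d = d₀ := by
    exact_mod_cast le_antisymm (le_of_mul_le_mul_right h₁ hpos) (le_of_mul_le_mul_right h₂ hpos)
  subst this
  exact lt_asymm hxy hlt

end Equilibrium

theorem NE_protection_mono_in_beta_general (Dmax : ℕ)
    (m : ℕ → ℝ) (hm : ∀ d ∈ Dset Dmax, 0 < m d)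
    (pP pU τ LP LU cP cI ξ ded Cov : ℝ) (K : ℕ) (hK : 1 ≤ K)
    (hpP : 0 ≤ pP) (hp : pP < pU)
    (hτ0 : 0 < τ)
    (hLP : 0 < LP) (hL : LP < (1 - ξ) * LU)
    (hξ0 : 0 < ξ) (hξ1 : ξ ≤ 1)
    (β₁ β₂ : ℝ) (hβ₁ : 0 < β₁) (hββ : β₁ ≤ β₂)
    (x₁ x₂ : ℕ → Act → ℝ)
    (hNE₁ : isNE Dmax m pP pU β₁ τ LP LU cP cI ξ ded Cov K x₁)
    (hNE₂ : isNE Dmax m pP pU β₂ τ LP LU cP cI ξ ded Cov K x₂) :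
    ∑ d ∈ Dset Dmax, x₁ d Act.P ≤ ∑ d ∈ Dset Dmax, x₂ d Act.P := by
  by_contra! hsum
  obtain ⟨d₀, hd₀, hlt⟩ := exists_lt_of_sum_lt hsum
  have hx₁_le : ∀ d ∈ Dset Dmax, x₁ d Act.P ≤ m d := fun _ hd => hNE₁.1.protection_le hd
  have he₂ : 0 < expo Dmax m pP pU β₂ K (fun d => x₂ d Act.P) :=
    expo_pos hm hpP hp (hβ₁.trans_le hββ) hK (fun _ hd => hNE₂.1.protection_le hd) hd₀
      (hlt.trans_le (hx₁_le d₀ hd₀))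
  have hle := protection_le_of_isNE hτ0 hLP hL hξ0.le hξ1 hNE₁ hNE₂ he₂ hd₀ hlt
  exact (expo_lt_expo hm hpP hp hβ₁ hββ hK hx₁_le hle hd₀ hlt).not_ge
    (expo_le_expo_of_isNE hτ0 hLP hL hξ0.le hξ1 hNE₁ hNE₂ hd₀ hlt)

/-- monotonicity of equilibrium protection in the indirect attack
probability: if `0 < β¹ ≤ β² ≤ 1` and `x¹`, `x²` are Nash equilibria of the games
with indirect attack probabilities `β¹`, `β²` respectively, then the total
protected mass at `x¹` is at most that at `x²`. -/
theorem NE_protection_mono_in_beta (Dmax : ℕ) (hD : 1 ≤ Dmax)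
    (m : ℕ → ℝ) (hm : ∀ d ∈ Dset Dmax, 0 < m d)
    (pP pU τ LP LU cP cI ξ ded Cov : ℝ) (K : ℕ) (hK : 1 ≤ K)
    (hpP : 0 ≤ pP) (hp : pP < pU) (hpU : pU ≤ 1)
    (hτ0 : 0 < τ) (hτ1 : τ ≤ 1)
    (hLP : 0 < LP) (hL : LP < (1 - ξ) * LU)
    (hξ0 : 0 < ξ) (hξ1 : ξ ≤ 1) (hCov : 0 ≤ Cov) (hded : 0 ≤ ded)
    (hc : cI + ded < cP)
    (β₁ β₂ : ℝ) (hβ₁ : 0 < β₁) (hββ : β₁ ≤ β₂) (hβ₂ : β₂ ≤ 1)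
    (x₁ x₂ : ℕ → Act → ℝ)
    (hNE₁ : isNE Dmax m pP pU β₁ τ LP LU cP cI ξ ded Cov K x₁)
    (hNE₂ : isNE Dmax m pP pU β₂ τ LP LU cP cI ξ ded Cov K x₂) :
    ∑ d ∈ Dset Dmax, x₁ d Act.P ≤ ∑ d ∈ Dset Dmax, x₂ d Act.P :=
  NE_protection_mono_in_beta_general Dmax m hm pP pU τ LP LU cP cI ξ ded Cov K hK hpP hp hτ0 hLP hL
    hξ0 hξ1 β₁ β₂ hβ₁ hββ x₁ x₂ hNE₁ hNE₂
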